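/- Let X ⊂ R^d be a finite dataset of size n and f : R^{d-1} → R a function. Then the infimum over m ∈ R^d, positive definite Σ_hat ∈ M_{d-1}(R) and σ > 0 of H^×(X‖N(m, Σ_hat, σ, f)) equals (d/2) ln(2πe) + (1/2) ln det(cov(X_hat)) + (1/2) ln((1/n) Σ_{x∈X} (x_d - f(x_hat) - m_d)^2), where m_d is the empirical mean of {x_d - f(x_hat) : x ∈ X}, and cov(X_hat) is the empirical covariance of the projected data X_hat (assumed positive definite, with the final sum positive). -/

import Mathlib

open Real Matrix

/-- Multivariate Gaussian density with mean `m` and covariance `C`. -/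
noncomputable def gaussDensity {ι : Type*} [Fintype ι] [DecidableEq ι] (m : ι → ℝ)
    (C : Matrix ι ι ℝ) (x : ι → ℝ) : ℝ :=
  (2 * π) ^ (-(Fintype.card ι : ℝ) / 2) * C.det ^ (-(1 : ℝ) / 2) *
    Real.exp (-(1 / 2) * ((x - m) ⬝ᵥ (C⁻¹ *ᵥ (x - m))))

/-- One-dimensional Gaussian density with mean `m` and variance `σ`. -/
noncomputable def gauss1 (m σ x : ℝ) : ℝ :=
  (2 * π * σ) ^ (-(1 : ℝ) / 2) * Real.exp (-(x - m) ^ 2 / (2 * σ))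

/-- Empirical cross-entropy of a finite dataset w.r.t. a density `g`. -/
noncomputable def crossEntropy {α : Type*} (n : ℕ) (X : Fin n → α) (g : α → ℝ) : ℝ :=
  -((1 / n : ℝ) * ∑ l, Real.log (g (X l)))

/-- Empirical cross-entropy of `X ⊂ ℝ^{d+1}` w.r.t. the `f`-adapted Gaussian
`N(m, Σ̂, σ, f)`. -/
noncomputable def fAdaptedCE (d n : ℕ) (f : (Fin d → ℝ) → ℝ)
    (X : Fin n → (Fin (d + 1) → ℝ)) (m : Fin (d + 1) → ℝ)
    (Shat : Matrix (Fin d) (Fin d) ℝ) (σ : ℝ) : ℝ :=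
  crossEntropy n X (fun x =>
    gaussDensity (fun i : Fin d => m (Fin.castSucc i)) Shat
        (fun i : Fin d => x (Fin.castSucc i)) *
      gauss1 (m (Fin.last d)) σ
        (x (Fin.last d) - f (fun i : Fin d => x (Fin.castSucc i))))


/-! The density factorises, so the cross-entropy splits into that of the projected data `X̂`
under `N(m̂, Σ̂)` and that of the residuals `x_d - f(x̂)` under `N(m_d, σ)`, and the two Gaussian
fits can be done separately. In each, moving the mean to the empirical mean can only decrease
the sum of (Mahalanobis) squared distances, by the bias–variance decomposition of a quadratic
form. What remains is `log det Σ̂ + tr (Σ̂⁻¹ C) ≥ log det C + d` for the empirical covariance `C`,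
which after conjugation by `C^{1/2}` is `log λ ≤ λ - 1` summed over eigenvalues. All bounds are
attained at the empirical mean and covariance. -/

open Finset

section Centering

variable {𝕜 E N : Type*} [Field 𝕜] [CharZero 𝕜] [AddCommGroup E] [Module 𝕜 E]

theorem sum_sub_mean_eq_zero {n : ℕ} (hn : n ≠ 0) (w : Fin n → E) {w₀ : E}
    (hw₀ : w₀ = (1 / n : 𝕜) • ∑ l, w l) : ∑ l, (w l - w₀) = 0 := by
  rw [sum_sub_distrib, sum_const, card_univ, Fintype.card_fin, ← Nat.cast_smul_eq_nsmul 𝕜, hw₀,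
    smul_smul, mul_one_div_cancel (Nat.cast_ne_zero.2 hn), one_smul, sub_self]

theorem QuadraticMap.sum_map_sub_eq [AddCommGroup N] [Module 𝕜 N] (Q : QuadraticMap 𝕜 E N)
    {n : ℕ} (hn : n ≠ 0) (w : Fin n → E) {w₀ : E} (hw₀ : w₀ = (1 / n : 𝕜) • ∑ l, w l) (t : E) :
    ∑ l, Q (w l - t) = ∑ l, Q (w l - w₀) + n • Q (w₀ - t) := by
  have hpolar : ∑ l, polar Q (w l - w₀) (w₀ - t) = 0 := by
    simp only [← polarBilin_apply_apply, ← LinearMap.sum_apply, ← map_sum,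
      sum_sub_mean_eq_zero hn w hw₀, map_zero, LinearMap.zero_apply]
  calc ∑ l, Q (w l - t) = ∑ l, (Q (w l - w₀) + Q (w₀ - t) + polar Q (w l - w₀) (w₀ - t)) := by
        simp only [← QuadraticMap.map_add, sub_add_sub_cancel]
    _ = ∑ l, Q (w l - w₀) + n • Q (w₀ - t) := by
        rw [sum_add_distrib, sum_add_distrib, hpolar, sum_const, card_univ, Fintype.card_fin,
          add_zero]

theorem QuadraticMap.sum_map_sub_mean_le [AddCommGroup N] [PartialOrder N] [IsOrderedAddMonoid N]
    [Module 𝕜 N] (Q : QuadraticMap 𝕜 E N) (hQ : ∀ x, 0 ≤ Q x) {n : ℕ} (hn : n ≠ 0)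
    (w : Fin n → E) {w₀ : E} (hw₀ : w₀ = (1 / n : 𝕜) • ∑ l, w l) (t : E) :
    ∑ l, Q (w l - w₀) ≤ ∑ l, Q (w l - t) := by
  rw [Q.sum_map_sub_eq hn w hw₀ t]
  exact le_add_of_nonneg_right (nsmul_nonneg (hQ _) n)

end Centering

namespace Matrix

variable {ι : Type*} [Fintype ι]

theorem sum_dotProduct_mulVec_eq_trace_mul_sum {R κ : Type*} [CommRing R] (A : Matrix ι ι R)
    (s : Finset κ) (v : κ → ι → R) :
    ∑ k ∈ s, v k ⬝ᵥ (A *ᵥ v k) = (A * ∑ k ∈ s, vecMulVec (v k) (v k)).trace := by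
  simp only [Matrix.mul_sum, trace_sum, mul_vecMulVec, trace_vecMulVec, dotProduct_comm]

variable [DecidableEq ι]

theorem toQuadraticForm'_apply {R : Type*} [CommRing R] (A : Matrix ι ι R) (x : ι → R) :
    A.toQuadraticForm' x = x ⬝ᵥ (A *ᵥ x) := by
  simp [toQuadraticForm', toLinearMap₂'_apply']

theorem PosDef.log_det_add_card_le_trace {M : Matrix ι ι ℝ} (hM : M.PosDef) :
    Real.log M.det + Fintype.card ι ≤ M.trace := by
  have hpos := hM.eigenvalues_pos
  rw [hM.isHermitian.det_eq_prod_eigenvalues, hM.isHermitian.trace_eq_sum_eigenvalues]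
  simp only [RCLike.ofReal_real_eq_id, id]
  calc Real.log (∏ i, hM.isHermitian.eigenvalues i) + Fintype.card ι
      = ∑ i, (Real.log (hM.isHermitian.eigenvalues i) + 1) := by
        rw [Real.log_prod fun i _ => (hpos i).ne', sum_add_distrib, sum_const, card_univ,
          nsmul_one]
    _ ≤ ∑ i, hM.isHermitian.eigenvalues i :=
        sum_le_sum fun i _ => by linarith [Real.log_le_sub_one_of_pos (hpos i)]

open scoped MatrixOrder in
theorem log_det_add_card_le_log_det_add_trace {S C : Matrix ι ι ℝ} (hS : S.PosDef)
    (hC : C.PosDef) : Real.log C.det + Fintype.card ι ≤ Real.log S.det + (S⁻¹ * C).trace := by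
  set T := CFC.sqrt C
  have hTT : T * T = C := CFC.sqrt_mul_sqrt_self C hC.posSemidef.nonneg
  have hTh : Tᴴ = T := (CFC.sqrt_nonneg C).posSemidef.isHermitian.eq
  have hdetT : T.det * T.det = C.det := by rw [← det_mul, hTT]
  have hT : IsUnit T := (isUnit_iff_isUnit_det T).2 <|
    isUnit_iff_ne_zero.2 <| left_ne_zero_of_mul <| hdetT ▸ hC.det_pos.ne'
  have hM : (T * S⁻¹ * T).PosDef := by
    simpa only [hTh] using hS.inv.mul_mul_conjTranspose_same (vecMul_injective_of_isUnit hT)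
  have hdetM : (T * S⁻¹ * T).det = C.det / S.det := by
    rw [det_mul, det_mul, det_nonsing_inv, Ring.inverse_eq_inv', ← hdetT]
    ring
  have htrM : (T * S⁻¹ * T).trace = (S⁻¹ * C).trace := by
    rw [trace_mul_cycle, hTT, trace_mul_comm]
  have := hM.log_det_add_card_le_trace
  rw [hdetM, htrM, Real.log_div hC.det_pos.ne' hS.det_pos.ne'] at this
  linarith

end Matrix

theorem crossEntropy_mul {α : Type*} (n : ℕ) (X : Fin n → α) {g h : α → ℝ}
    (hg : ∀ l, g (X l) ≠ 0) (hh : ∀ l, h (X l) ≠ 0) :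
    crossEntropy n X (fun x => g x * h x) = crossEntropy n X g + crossEntropy n X h := by
  simp only [crossEntropy, Real.log_mul (hg _) (hh _), sum_add_distrib]
  ring

theorem crossEntropy_eq_add_mean {α : Type*} {n : ℕ} (hn : n ≠ 0) (X : Fin n → α) {g : α → ℝ}
    (c : ℝ) (φ : α → ℝ) (hg : ∀ x, Real.log (g x) = -(c + φ x)) :
    crossEntropy n X g = c + (1 / n : ℝ) * ∑ l, φ (X l) := by
  have hn' : (n : ℝ) ≠ 0 := Nat.cast_ne_zero.2 hn
  simp only [crossEntropy, hg, sum_neg_distrib, sum_add_distrib, sum_const, card_univ,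
    Fintype.card_fin, nsmul_eq_mul]
  field_simp

section Gaussian

variable {ι : Type*} [Fintype ι] [DecidableEq ι]

theorem gaussDensity_pos (m : ι → ℝ) {C : Matrix ι ι ℝ} (hC : 0 < C.det) (x : ι → ℝ) :
    0 < gaussDensity m C x := by
  unfold gaussDensity
  positivity

theorem log_gaussDensity (m : ι → ℝ) {C : Matrix ι ι ℝ} (hC : 0 < C.det) (x : ι → ℝ) :
    Real.log (gaussDensity m C x) = -((Fintype.card ι / 2 : ℝ) * Real.log (2 * π) +
      1 / 2 * Real.log C.det + 1 / 2 * ((x - m) ⬝ᵥ (C⁻¹ *ᵥ (x - m)))) := by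
  unfold gaussDensity
  rw [Real.log_mul (by positivity) (by positivity), Real.log_mul (by positivity) (by positivity),
    Real.log_exp, Real.log_rpow (by positivity), Real.log_rpow hC]
  ring

theorem gauss1_pos (m : ℝ) {σ : ℝ} (hσ : 0 < σ) (x : ℝ) : 0 < gauss1 m σ x := by
  unfold gauss1
  positivity

theorem log_gauss1 (m : ℝ) {σ : ℝ} (hσ : 0 < σ) (x : ℝ) :
    Real.log (gauss1 m σ x) = -(1 / 2 * Real.log (2 * π * σ) + (x - m) ^ 2 / (2 * σ)) := by
  unfold gauss1
  rw [Real.log_mul (by positivity) (by positivity), Real.log_exp, Real.log_rpow (by positivity)]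
  ring

end Gaussian

section GaussianFit

variable {ι : Type*} [Fintype ι] {n : ℕ}

theorem trace_mul_empiricalCov (Y : Fin n → ι → ℝ) (Y₀ : ι → ℝ) {C : Matrix ι ι ℝ}
    (hC : C = (1 / n : ℝ) • ∑ l, vecMulVec (Y l - Y₀) (Y l - Y₀)) (A : Matrix ι ι ℝ) :
    (A * C).trace = (1 / n : ℝ) * ∑ l, (Y l - Y₀) ⬝ᵥ (A *ᵥ (Y l - Y₀)) := by
  rw [hC, Matrix.mul_smul, trace_smul, smul_eq_mul, sum_dotProduct_mulVec_eq_trace_mul_sum]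

variable [DecidableEq ι]

theorem crossEntropy_gaussDensity_ge (hn : n ≠ 0) (Y : Fin n → ι → ℝ) {Y₀ : ι → ℝ}
    (hY₀ : Y₀ = (1 / n : ℝ) • ∑ l, Y l) {C : Matrix ι ι ℝ}
    (hC : C = (1 / n : ℝ) • ∑ l, vecMulVec (Y l - Y₀) (Y l - Y₀)) (hCpd : C.PosDef)
    (μ : ι → ℝ) {S : Matrix ι ι ℝ} (hS : S.PosDef) :
    (Fintype.card ι / 2 : ℝ) * Real.log (2 * π * Real.exp 1) + 1 / 2 * Real.log C.det ≤
      crossEntropy n Y (gaussDensity μ S) := by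
  rw [crossEntropy_eq_add_mean hn Y _ _ (log_gaussDensity μ hS.det_pos), ← mul_sum,
    Real.log_mul (by positivity) (Real.exp_pos 1).ne', Real.log_exp]
  have hbias : ∑ l, (Y l - Y₀) ⬝ᵥ (S⁻¹ *ᵥ (Y l - Y₀)) ≤ ∑ l, (Y l - μ) ⬝ᵥ (S⁻¹ *ᵥ (Y l - μ)) := by
    have hQ (x : ι → ℝ) : 0 ≤ S⁻¹.toQuadraticForm' x := by
      simpa only [toQuadraticForm'_apply, star_trivial] using
        hS.inv.posSemidef.dotProduct_mulVec_nonneg x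
    simpa only [toQuadraticForm'_apply] using
      (S⁻¹.toQuadraticForm').sum_map_sub_mean_le hQ hn Y hY₀ μ
  have hfit : (S⁻¹ * C).trace ≤ (1 / n : ℝ) * ∑ l, (Y l - μ) ⬝ᵥ (S⁻¹ *ᵥ (Y l - μ)) := by
    rw [trace_mul_empiricalCov Y Y₀ hC]
    gcongr
  linarith [log_det_add_card_le_log_det_add_trace hS hCpd]

theorem crossEntropy_gaussDensity_empirical (hn : n ≠ 0) (Y : Fin n → ι → ℝ) (Y₀ : ι → ℝ)
    {C : Matrix ι ι ℝ} (hC : C = (1 / n : ℝ) • ∑ l, vecMulVec (Y l - Y₀) (Y l - Y₀))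
    (hCpd : C.PosDef) :
    crossEntropy n Y (gaussDensity Y₀ C) =
      (Fintype.card ι / 2 : ℝ) * Real.log (2 * π * Real.exp 1) + 1 / 2 * Real.log C.det := by
  have hfit := trace_mul_empiricalCov Y Y₀ hC C⁻¹
  rw [nonsing_inv_mul C hCpd.det_pos.ne'.isUnit, trace_one] at hfit
  rw [crossEntropy_eq_add_mean hn Y _ _ (log_gaussDensity Y₀ hCpd.det_pos), ← mul_sum,
    mul_left_comm, ← hfit, Real.log_mul (by positivity) (Real.exp_pos 1).ne', Real.log_exp]
  ring

end GaussianFit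

section ScalarGaussianFit

variable {n : ℕ}

theorem crossEntropy_gauss1_ge (hn : n ≠ 0) (y : Fin n → ℝ) {y₀ : ℝ}
    (hy₀ : y₀ = (1 / n : ℝ) * ∑ l, y l) (hvar : 0 < (1 / n : ℝ) * ∑ l, (y l - y₀) ^ 2)
    (μ : ℝ) {σ : ℝ} (hσ : 0 < σ) :
    1 / 2 * Real.log (2 * π * Real.exp 1) + 1 / 2 * Real.log ((1 / n : ℝ) * ∑ l, (y l - y₀) ^ 2) ≤
      crossEntropy n y (gauss1 μ σ) := by
  set s := (1 / n : ℝ) * ∑ l, (y l - y₀) ^ 2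
  rw [crossEntropy_eq_add_mean hn y _ _ (log_gauss1 μ hσ), ← sum_div, mul_div_assoc',
    Real.log_mul (by positivity) (Real.exp_pos 1).ne', Real.log_exp,
    Real.log_mul (by positivity) hσ.ne']
  have hbias : ∑ l, (y l - y₀) ^ 2 ≤ ∑ l, (y l - μ) ^ 2 := by
    simpa [sq] using
      (QuadraticMap.sq (R := ℝ) (A := ℝ)).sum_map_sub_mean_le mul_self_nonneg hn y hy₀ μ
  have hfit : s / (2 * σ) ≤ (1 / n : ℝ) * (∑ l, (y l - μ) ^ 2) / (2 * σ) :=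
    div_le_div_of_nonneg_right (mul_le_mul_of_nonneg_left hbias (by positivity)) (by positivity)
  have hlog : Real.log s + 1 ≤ Real.log σ + s / σ := by
    have := Real.log_le_sub_one_of_pos (div_pos hvar hσ)
    rw [Real.log_div hvar.ne' hσ.ne'] at this
    linarith
  have hhalf : s / (2 * σ) = s / σ / 2 := by ring
  linarith

theorem crossEntropy_gauss1_empirical (hn : n ≠ 0) (y : Fin n → ℝ) (y₀ : ℝ)
    (hvar : 0 < (1 / n : ℝ) * ∑ l, (y l - y₀) ^ 2) :
    crossEntropy n y (gauss1 y₀ ((1 / n : ℝ) * ∑ l, (y l - y₀) ^ 2)) =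
      1 / 2 * Real.log (2 * π * Real.exp 1) +
        1 / 2 * Real.log ((1 / n : ℝ) * ∑ l, (y l - y₀) ^ 2) := by
  rw [crossEntropy_eq_add_mean hn y _ _ (log_gauss1 y₀ hvar), ← sum_div, mul_div_assoc',
    div_mul_cancel_right₀ hvar.ne', Real.log_mul (by positivity) (Real.exp_pos 1).ne',
    Real.log_exp, Real.log_mul (by positivity) hvar.ne']
  ring

end ScalarGaussianFit

theorem fAdaptedCE_eq_add (d n : ℕ) (f : (Fin d → ℝ) → ℝ) (X : Fin n → (Fin (d + 1) → ℝ))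
    (m : Fin (d + 1) → ℝ) {Shat : Matrix (Fin d) (Fin d) ℝ} (hS : 0 < Shat.det) {σ : ℝ}
    (hσ : 0 < σ) :
    fAdaptedCE d n f X m Shat σ =
      crossEntropy n (fun l i => X l i.castSucc) (gaussDensity (fun i => m i.castSucc) Shat) +
        crossEntropy n (fun l => X l (Fin.last d) - f fun i => X l i.castSucc)
          (gauss1 (m (Fin.last d)) σ) :=
  crossEntropy_mul n X (fun _ => (gaussDensity_pos _ hS _).ne') (fun _ => (gauss1_pos _ hσ _).ne')

/-- the infimum over parameters `(m, Σ̂, σ)` of the cross-entropy of `X`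
w.r.t. the `f`-adapted Gaussians is attained and equals
`(d/2) ln(2πe) + (1/2) ln det cov(X̂) + (1/2) ln((1/n) Σ (x_d - f(x̂) - m_d)²)`. -/
theorem fAdapted_cross_entropy_inf (d n : ℕ) (hn : 0 < n) (f : (Fin d → ℝ) → ℝ)
    (X : Fin n → (Fin (d + 1) → ℝ))
    (Xhat : Fin n → (Fin d → ℝ)) (hXhat : ∀ l, Xhat l = fun i => X l (Fin.castSucc i))
    (res : Fin n → ℝ) (hres : ∀ l, res l = X l (Fin.last d) - f (Xhat l))
    (mhat : Fin d → ℝ) (hmhat : mhat = (1 / n : ℝ) • ∑ l, Xhat l)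
    (md : ℝ) (hmd : md = (1 / n : ℝ) * ∑ l, res l)
    (cov : Matrix (Fin d) (Fin d) ℝ)
    (hcov : cov = (1 / n : ℝ) • ∑ l, Matrix.vecMulVec (Xhat l - mhat) (Xhat l - mhat))
    (hcovPD : cov.PosDef)
    (hvar : 0 < (1 / n : ℝ) * ∑ l, (res l - md) ^ 2) :
    (∀ (m : Fin (d + 1) → ℝ) (Shat : Matrix (Fin d) (Fin d) ℝ) (σ : ℝ),
        Shat.PosDef → 0 < σ →
        ((d + 1 : ℝ) / 2) * Real.log (2 * π * Real.exp 1) +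
            (1 / 2) * Real.log cov.det +
            (1 / 2) * Real.log ((1 / n : ℝ) * ∑ l, (res l - md) ^ 2) ≤
          fAdaptedCE d n f X m Shat σ) ∧
      ∃ (m : Fin (d + 1) → ℝ) (Shat : Matrix (Fin d) (Fin d) ℝ) (σ : ℝ),
        Shat.PosDef ∧ 0 < σ ∧
        fAdaptedCE d n f X m Shat σ =
          ((d + 1 : ℝ) / 2) * Real.log (2 * π * Real.exp 1) +
            (1 / 2) * Real.log cov.det +
            (1 / 2) * Real.log ((1 / n : ℝ) * ∑ l, (res l - md) ^ 2) := by
  have hX : (fun l i => X l i.castSucc) = Xhat := funext fun l => (hXhat l).symm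
  have hr : (fun l => X l (Fin.last d) - f fun i => X l i.castSucc) = res :=
    funext fun l => by rw [hres, hXhat]
  have hsplit : (d + 1 : ℝ) / 2 = (Fintype.card (Fin d) : ℝ) / 2 + 1 / 2 := by
    rw [Fintype.card_fin]; ring
  simp only [hsplit, add_mul]
  refine ⟨fun m Shat σ hS hσ => ?_, Fin.snoc mhat md, cov, _, hcovPD, hvar, ?_⟩
  · rw [fAdaptedCE_eq_add d n f X m hS.det_pos hσ, hX, hr]
    linarith [crossEntropy_gaussDensity_ge hn.ne' Xhat hmhat hcov hcovPD (fun i => m i.castSucc) hS,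
      crossEntropy_gauss1_ge hn.ne' res hmd hvar (m (Fin.last d)) hσ]
  · rw [fAdaptedCE_eq_add d n f X _ hcovPD.det_pos hvar, hX, hr]
    simp only [Fin.snoc_castSucc, Fin.snoc_last]
    rw [crossEntropy_gaussDensity_empirical hn.ne' Xhat mhat hcov hcovPD,
      crossEntropy_gauss1_empirical hn.ne' res md hvar]
    ring
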